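/- For every complex number q with |q| < 1, ∏_{n=1}^∞ (1-q^{2n})⁹ / ((1-qⁿ)³ (1-q^{4n})³) = ∑_{n=0}^∞ (-2/n) · n · q^{(n²-1)/8}, where the sum effectively runs over odd n (for which (n²-1)/8 is a nonnegative integer) and (-2/n) is the Kronecker symbol. -/

import Mathlib

/-!
Notation: `φ(q) = ∏ (1 - qⁿ)` is `eulerFunction`, `(q;q)ₙ` is `qFactorial`, the Gaussian binomial
`[m, i]_q` is `gaussBinom`, and `t_m = m(m+1)/2` is `(m + 1).choose 2`.

Splitting each product into its odd and even factors gives `φ(q) φ(-q) φ(q⁴) = φ(q²)³`, so the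
product is `φ(-q)³`. Only odd `n = 2m + 1` contribute to the series, with
`(-2/n) = (-1)^(m + t_m)`, so the series is `∑ (-1)ᵐ (2m+1) (-q)^(t_m)`, and the theorem is
Jacobi's identity `φ(q)³ = ∑ (-1)ᵐ (2m+1) q^(t_m)` at `-q`.

For Jacobi's identity, the q-binomial theorem expands `∏_{k ≤ 2n} (1 - w q^(k-n))` as a
polynomial in `w`. The product has the factor `1 - w`, so differentiating at `w = 1` gives
`(q;q)ₙ² = ∑_{m ≤ n} (-1)ᵐ (2m+1) q^(t_m) [2n+1, n+1+m]_q`. The Gaussian binomials are bounded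
and tend to `1/φ(q)`, so dominated convergence as `n → ∞` gives
`φ(q)² = φ(q)⁻¹ ∑ (-1)ᵐ (2m+1) q^(t_m)`.
-/

/-- The Kronecker symbol `(-2/n)`. -/
def kronNegTwo (n : ℕ) : ℤ :=
  if n % 8 = 1 ∨ n % 8 = 3 then 1
  else if n % 8 = 5 ∨ n % 8 = 7 then -1
  else 0

open Finset

lemma Nat.succ_choose_two (i : ℕ) : (i + 1).choose 2 = i.choose 2 + i := by
  rw [Nat.choose_succ_succ', Nat.choose_one_right, add_comm]

section GaussBinom

variable {R : Type*} [CommRing R]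

def qFactorial (q : R) (n : ℕ) : R := ∏ k ∈ range n, (1 - q ^ (k + 1))

def gaussBinom (q : R) : ℕ → ℕ → R
  | _, 0 => 1
  | 0, _ + 1 => 0
  | m + 1, i + 1 => gaussBinom q m i + q ^ (i + 1) * gaussBinom q m (i + 1)

variable (q : R)

lemma qFactorial_succ (n : ℕ) : qFactorial q (n + 1) = qFactorial q n * (1 - q ^ (n + 1)) :=
  prod_range_succ _ _

@[simp] lemma gaussBinom_zero_right (m : ℕ) : gaussBinom q m 0 = 1 := by
  cases m <;> rfl

lemma gaussBinom_succ_succ (m i : ℕ) :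
    gaussBinom q (m + 1) (i + 1) = gaussBinom q m i + q ^ (i + 1) * gaussBinom q m (i + 1) :=
  rfl

lemma gaussBinom_eq_zero_of_lt : ∀ {m i : ℕ}, m < i → gaussBinom q m i = 0
  | 0, _ + 1, _ => rfl
  | m + 1, i + 1, h => by
    rw [gaussBinom_succ_succ, gaussBinom_eq_zero_of_lt (by omega),
      gaussBinom_eq_zero_of_lt (by omega), mul_zero, add_zero]

@[simp] lemma gaussBinom_self : ∀ m : ℕ, gaussBinom q m m = 1
  | 0 => rfl
  | m + 1 => by
    rw [gaussBinom_succ_succ, gaussBinom_self m, gaussBinom_eq_zero_of_lt q (Nat.lt_succ_self m),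
      mul_zero, add_zero]

lemma gaussBinom_mul_qFactorial_mul_qFactorial : ∀ {m i : ℕ}, i ≤ m →
    gaussBinom q m i * qFactorial q i * qFactorial q (m - i) = qFactorial q m
  | m, 0, _ => by simp [qFactorial]
  | m + 1, i + 1, h => by
    rcases (Nat.le_of_succ_le_succ h).eq_or_lt with rfl | hlt
    · simp [qFactorial]
    obtain ⟨j, hj⟩ : ∃ j, m - i = j + 1 := ⟨m - i - 1, by omega⟩
    have ih₁ := gaussBinom_mul_qFactorial_mul_qFactorial hlt.le
    have ih₂ := gaussBinom_mul_qFactorial_mul_qFactorial hlt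
    rw [hj, qFactorial_succ] at ih₁
    rw [show m - (i + 1) = j by omega, qFactorial_succ] at ih₂
    have hpow : q ^ (i + 1) * q ^ (j + 1) = q ^ (m + 1) := by rw [← pow_add]; congr 1; omega
    rw [gaussBinom_succ_succ, show m + 1 - (i + 1) = j + 1 by omega, qFactorial_succ,
      qFactorial_succ, qFactorial_succ]
    linear_combination (1 - q ^ (i + 1)) * ih₁ + q ^ (i + 1) * (1 - q ^ (j + 1)) * ih₂ -
      qFactorial q m * hpow

theorem prod_one_add_mul_pow_eq_sum_gaussBinom (m : ℕ) (z : R) :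
    ∏ k ∈ range m, (1 + z * q ^ k) =
      ∑ i ∈ range (m + 1), q ^ i.choose 2 * gaussBinom q m i * z ^ i := by
  induction m generalizing z with
  | zero => simp
  | succ m ih =>
    have hprod : ∏ k ∈ range (m + 1), (1 + z * q ^ k) =
        (1 + z) * ∏ k ∈ range m, (1 + (z * q) * q ^ k) := by
      rw [prod_range_succ', mul_comm]; simp [pow_succ, mul_assoc, mul_comm q]
    set a : ℕ → R := fun i => q ^ i.choose 2 * gaussBinom q m i
    have hshift : ∑ i ∈ range (m + 1), a i * (z * q) ^ i =
        ∑ i ∈ range (m + 1), a (i + 1) * (z * q) ^ (i + 1) + 1 := by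
      rw [sum_range_succ', sum_range_succ (fun i => a (i + 1) * (z * q) ^ (i + 1)) m]
      simp [a, gaussBinom_eq_zero_of_lt q (Nat.lt_succ_self m)]
    rw [hprod, ih]
    calc (1 + z) * ∑ i ∈ range (m + 1), a i * (z * q) ^ i
        = ∑ i ∈ range (m + 1), a i * (z * q) ^ i +
            ∑ i ∈ range (m + 1), z * (a i * (z * q) ^ i) := by
          rw [add_mul, one_mul, mul_sum]
      _ = ∑ i ∈ range (m + 1), (a (i + 1) * (z * q) ^ (i + 1) + z * (a i * (z * q) ^ i)) +
            1 := by
          rw [hshift, sum_add_distrib]; ring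
      _ = _ := by
          rw [sum_range_succ' _ (m + 1)]
          refine congrArg₂ (· + ·) (sum_congr rfl fun i _ => ?_) (by simp)
          simp only [a, gaussBinom_succ_succ, Nat.succ_choose_two, pow_add]
          ring

lemma gaussBinom_sub [IsDomain R] {m i : ℕ} (hq : qFactorial q m ≠ 0) (h : i ≤ m) :
    gaussBinom q m (m - i) = gaussBinom q m i := by
  have h₁ := gaussBinom_mul_qFactorial_mul_qFactorial q (Nat.sub_le m i)
  have h₂ := gaussBinom_mul_qFactorial_mul_qFactorial q h
  rw [Nat.sub_sub_self h] at h₁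
  have hne : qFactorial q i * qFactorial q (m - i) ≠ 0 := by
    rw [← h₂, mul_assoc] at hq
    exact right_ne_zero_of_mul hq
  refine mul_right_cancel₀ hne ?_
  linear_combination h₁ - h₂

end GaussBinom

lemma sum_mul_natCast_eq_neg_of_eq_one_sub_mul {𝕜 : Type*} [NontriviallyNormedField 𝕜]
    {s : Finset ℕ} {a : ℕ → 𝕜} {G : 𝕜 → 𝕜} (hG : DifferentiableAt 𝕜 G 1)
    (h : ∀ w, ∑ i ∈ s, a i * w ^ i = (1 - w) * G w) :
    ∑ i ∈ s, a i * i = -G 1 := by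
  have hsum :
      HasDerivAt (fun w => ∑ i ∈ s, a i * w ^ i) (∑ i ∈ s, a i * (i * 1 ^ (i - 1))) 1 :=
    HasDerivAt.fun_sum fun i _ => (hasDerivAt_pow i 1).const_mul (a i)
  have hprod : HasDerivAt (fun w => (1 - w) * G w) (-1 * G 1 + (1 - 1) * deriv G 1) 1 :=
    ((hasDerivAt_id 1).const_sub 1).mul hG.hasDerivAt
  rw [funext h] at hsum
  simpa using hsum.unique hprod

lemma sum_range_two_mul_add_two {M : Type*} [AddCommMonoid M] (f : ℕ → M) (n : ℕ) :
    ∑ i ∈ range (2 * n + 2), f i = ∑ m ∈ range (n + 1), (f (n - m) + f (n + 1 + m)) := by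
  rw [show 2 * n + 2 = (n + 1) + (n + 1) by ring, sum_range_add, sum_add_distrib,
    ← sum_range_reflect f (n + 1)]
  simp

section Finite

variable {K : Type*} [Field K] {q : K}

lemma prod_range_one_sub_inv_pow (hq : q ≠ 0) (n : ℕ) :
    q ^ (n + 1).choose 2 * ∏ j ∈ range n, (1 - 1 / q ^ (j + 1)) =
      (-1) ^ n * qFactorial q n := by
  induction n with
  | zero => simp [qFactorial]
  | succ n ih =>
    have hlast : q ^ (n + 1) * (1 - 1 / q ^ (n + 1)) = -(1 - q ^ (n + 1)) := by
      field_simp; ring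
    rw [prod_range_succ, qFactorial_succ, Nat.succ_choose_two (n + 1), pow_add]
    calc _ = (q ^ (n + 1).choose 2 * ∏ j ∈ range n, (1 - 1 / q ^ (j + 1))) *
          (q ^ (n + 1) * (1 - 1 / q ^ (n + 1))) := by ring
      _ = _ := by rw [ih, hlast]; ring

/-- The coefficient of `wⁱ` in `∏_{k ≤ 2n} (1 - w q^(k - n))`. -/
def tripleCoeff (q : K) (n i : ℕ) : K :=
  (-1) ^ i * q ^ i.choose 2 * gaussBinom q (2 * n + 1) i / q ^ (n * i)

theorem sum_tripleCoeff_mul_pow (hq : q ≠ 0) (n : ℕ) (w : K) :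
    ∑ i ∈ range (2 * n + 2), tripleCoeff q n i * w ^ i =
      (1 - w) * ((∏ j ∈ range n, (1 - w / q ^ (j + 1))) *
        ∏ k ∈ range n, (1 - w * q ^ (k + 1))) := by
  have hbinom := prod_one_add_mul_pow_eq_sum_gaussBinom q (2 * n + 1) (-w / q ^ n)
  have hterm (i : ℕ) : q ^ i.choose 2 * gaussBinom q (2 * n + 1) i * (-w / q ^ n) ^ i =
      tripleCoeff q n i * w ^ i := by
    rw [tripleCoeff, div_pow, neg_pow, ← pow_mul]; ring
  simp only [hterm] at hbinom
  rw [← hbinom, show 2 * n + 1 = n + (n + 1) by ring, prod_range_add, prod_range_succ',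
    ← prod_range_reflect _ n]
  have hlow : ∀ j ∈ range n, 1 + -w / q ^ n * q ^ (n - 1 - j) = 1 - w / q ^ (j + 1) := by
    intro j hj
    have : q ^ (n - 1 - j) * q ^ (j + 1) = q ^ n := by
      rw [← pow_add]; congr 1; have := mem_range.1 hj; omega
    rw [eq_div_of_mul_eq (pow_ne_zero _ hq) this]
    field_simp
    ring
  have hhigh (k : ℕ) : 1 + -w / q ^ n * q ^ (n + k) = 1 - w * q ^ k := by
    rw [pow_add]; field_simp; ring
  rw [prod_congr rfl hlow]
  simp only [hhigh]
  simp only [pow_zero, mul_one]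
  ring

lemma neg_one_pow_mul_pow_mul_tripleCoeff (hq : q ≠ 0) {n i m : ℕ} {ε : K}
    (hs : (-1) ^ n * (-1) ^ i = ε * (-1) ^ m)
    (he : (n + 1).choose 2 + i.choose 2 = n * i + (m + 1).choose 2) :
    (-1) ^ n * q ^ (n + 1).choose 2 * tripleCoeff q n i =
      ε * ((-1) ^ m * q ^ (m + 1).choose 2 * gaussBinom q (2 * n + 1) i) := by
  rw [tripleCoeff, mul_div_assoc', div_eq_iff (pow_ne_zero _ hq)]
  calc _ = (-1) ^ n * (-1) ^ i * q ^ ((n + 1).choose 2 + i.choose 2) *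
        gaussBinom q (2 * n + 1) i := by ring
    _ = _ := by rw [hs, he]; ring

lemma sum_tripleCoeff_mul_sub_eq (hq : q ≠ 0) (n : ℕ) :
    (-1) ^ n * q ^ (n + 1).choose 2 *
        ∑ i ∈ range (2 * n + 2), tripleCoeff q n i * ((i : K) - n) =
      -∑ m ∈ range (n + 1), (-1) ^ m * q ^ (m + 1).choose 2 *
        (m * gaussBinom q (2 * n + 1) (n - m) +
          (m + 1) * gaussBinom q (2 * n + 1) (n + 1 + m)) := by
  rw [mul_sum, sum_range_two_mul_add_two, ← sum_neg_distrib]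
  refine sum_congr rfl fun m hm => ?_
  obtain ⟨r, rfl⟩ := Nat.exists_eq_add_of_le (mem_range_succ_iff.1 hm)
  rw [Nat.add_sub_cancel_left]
  have hlow := neg_one_pow_mul_pow_mul_tripleCoeff hq (n := m + r) (i := r) (m := m) (ε := 1)
    (by rw [← pow_add, show m + r + r = m + 2 * r by ring, pow_add, pow_mul]; simp)
    (by qify; simp only [Nat.cast_choose_two]; push_cast; ring)
  have hhigh := neg_one_pow_mul_pow_mul_tripleCoeff hq (n := m + r) (i := m + r + 1 + m) (m := m)
    (ε := -1)
    (by rw [← pow_add, show m + r + (m + r + 1 + m) = 2 * (m + r) + 1 + m by ring, pow_add,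
      pow_add, pow_mul]; simp)
    (by qify; simp only [Nat.cast_choose_two]; push_cast; ring)
  push_cast
  linear_combination ((r : K) - (m + r)) * hlow + ((m : K) + r + 1 + m - (m + r)) * hhigh

end Finite

section Jacobi

variable {𝕜 : Type*} [NontriviallyNormedField 𝕜] {q : 𝕜}

theorem qFactorial_sq_eq_sum_gaussBinom (hq : q ≠ 0) {n : ℕ}
    (hn : qFactorial q (2 * n + 1) ≠ 0) :
    qFactorial q n ^ 2 = ∑ m ∈ range (n + 1),
      (-1) ^ m * (2 * m + 1) * q ^ (m + 1).choose 2 * gaussBinom q (2 * n + 1) (n + 1 + m) := by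
  have hsymm : ∀ m ∈ range (n + 1), (-1) ^ m * (2 * m + 1) * q ^ (m + 1).choose 2 *
      gaussBinom q (2 * n + 1) (n + 1 + m) = (-1) ^ m * q ^ (m + 1).choose 2 *
        (m * gaussBinom q (2 * n + 1) (n - m) +
          (m + 1) * gaussBinom q (2 * n + 1) (n + 1 + m)) := by
    intro m hm
    have hmn := mem_range_succ_iff.1 hm
    rw [show n - m = 2 * n + 1 - (n + 1 + m) by omega, gaussBinom_sub q hn (by omega)]
    ring
  rw [sum_congr rfl hsymm]
  set G : 𝕜 → 𝕜 := fun w =>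
    (∏ j ∈ range n, (1 - w / q ^ (j + 1))) * ∏ k ∈ range n, (1 - w * q ^ (k + 1))
  have hG : DifferentiableAt 𝕜 G 1 := by fun_prop
  have hderiv : ∑ i ∈ range (2 * n + 2), tripleCoeff q n i * i = -G 1 :=
    sum_mul_natCast_eq_neg_of_eq_one_sub_mul hG (sum_tripleCoeff_mul_pow hq n)
  have hsum : ∑ i ∈ range (2 * n + 2), tripleCoeff q n i = 0 := by
    simpa using sum_tripleCoeff_mul_pow hq n 1
  have hG₁ : q ^ (n + 1).choose 2 * G 1 = (-1) ^ n * qFactorial q n ^ 2 := by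
    simp only [G, one_mul, ← mul_assoc, prod_range_one_sub_inv_pow hq]
    rw [qFactorial]; ring
  have hsub : ∑ i ∈ range (2 * n + 2), tripleCoeff q n i * ((i : 𝕜) - n) = -G 1 := by
    simp only [mul_sub, sum_sub_distrib, ← sum_mul, hderiv, hsum]; ring
  rw [← neg_neg (∑ m ∈ range _, _), ← sum_tripleCoeff_mul_sub_eq hq, hsub]
  calc _ = (-1) ^ n * (-1) ^ n * qFactorial q n ^ 2 := by rw [← mul_pow]; simp
    _ = _ := by rw [mul_assoc, ← hG₁]; ring

end Jacobi

open Filter Topology Function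

lemma summable_two_mul_add_one_mul_pow {r : ℝ} (hr₀ : 0 ≤ r) (hr : r < 1) :
    Summable fun m : ℕ => (2 * m + 1) * r ^ m := by
  have h := ((summable_pow_mul_geometric_of_norm_lt_one 1 (r := r)
    (by rwa [Real.norm_of_nonneg hr₀])).mul_left 2).add (summable_geometric_of_lt_one hr₀ hr)
  exact h.congr fun m => by ring

noncomputable def eulerFunction (q : ℂ) : ℂ := ∏' n : ℕ, (1 - q ^ (n + 1))

section Euler

variable {q : ℂ}

lemma summable_norm_neg_pow_comp (hq : ‖q‖ < 1) {e : ℕ → ℕ} (he : Injective e) :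
    Summable fun k => ‖-q ^ e k‖ := by
  simp only [norm_neg, norm_pow]
  exact (summable_geometric_of_lt_one (norm_nonneg q) hq).comp_injective he

lemma multipliable_one_sub_pow_comp (hq : ‖q‖ < 1) {e : ℕ → ℕ} (he : Injective e) :
    Multipliable fun k => 1 - q ^ e k := by
  simpa [sub_eq_add_neg] using multipliable_one_add_of_summable (summable_norm_neg_pow_comp hq he)

lemma hasProd_eulerFunction (hq : ‖q‖ < 1) :
    HasProd (fun n => 1 - q ^ (n + 1)) (eulerFunction q) :=
  (multipliable_one_sub_pow_comp hq (add_left_injective 1)).hasProd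

lemma norm_pow_lt_one (hq : ‖q‖ < 1) {k : ℕ} (hk : k ≠ 0) : ‖q ^ k‖ < 1 := by
  rw [norm_pow]; exact pow_lt_one₀ (norm_nonneg q) hq hk

lemma one_sub_pow_ne_zero (hq : ‖q‖ < 1) {k : ℕ} (hk : k ≠ 0) : 1 - q ^ k ≠ 0 := by
  refine sub_ne_zero.2 fun h => ?_
  simpa [← h] using norm_pow_lt_one hq hk

lemma eulerFunction_ne_zero (hq : ‖q‖ < 1) : eulerFunction q ≠ 0 := by
  have hne (n : ℕ) : 1 + -q ^ (n + 1) ≠ 0 := by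
    simpa [sub_eq_add_neg] using one_sub_pow_ne_zero hq n.succ_ne_zero
  simpa [eulerFunction, sub_eq_add_neg] using
    tprod_one_add_ne_zero_of_summable hne (summable_norm_neg_pow_comp hq (add_left_injective 1))

lemma qFactorial_ne_zero (hq : ‖q‖ < 1) (n : ℕ) : qFactorial q n ≠ 0 :=
  prod_ne_zero_iff.2 fun k _ => one_sub_pow_ne_zero hq k.succ_ne_zero

lemma tendsto_qFactorial (hq : ‖q‖ < 1) :
    Tendsto (qFactorial q) atTop (𝓝 (eulerFunction q)) :=
  (hasProd_eulerFunction hq).tendsto_prod_nat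

lemma gaussBinom_eq_div (hq : ‖q‖ < 1) {m i : ℕ} (h : i ≤ m) :
    gaussBinom q m i = qFactorial q m / (qFactorial q i * qFactorial q (m - i)) := by
  rw [eq_div_iff (mul_ne_zero (qFactorial_ne_zero hq i) (qFactorial_ne_zero hq _)), ← mul_assoc,
    gaussBinom_mul_qFactorial_mul_qFactorial q h]

lemma exists_norm_gaussBinom_le (hq : ‖q‖ < 1) :
    ∃ C, ∀ m i, ‖gaussBinom q m i‖ ≤ C := by
  obtain ⟨A, hA⟩ := isBounded_iff_forall_norm_le.1
    (Metric.isBounded_range_of_tendsto _ (tendsto_qFactorial hq))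
  obtain ⟨B, hB⟩ := isBounded_iff_forall_norm_le.1 (Metric.isBounded_range_of_tendsto _
    ((tendsto_qFactorial hq).inv₀ (eulerFunction_ne_zero hq)))
  have hA' (n : ℕ) : ‖qFactorial q n‖ ≤ A := hA _ ⟨n, rfl⟩
  have hB' (n : ℕ) : ‖(qFactorial q n)⁻¹‖ ≤ B := hB _ ⟨n, rfl⟩
  have hA₀ : 0 ≤ A := (norm_nonneg _).trans (hA' 0)
  have hB₀ : 0 ≤ B := (norm_nonneg _).trans (hB' 0)
  refine ⟨A * B * B, fun m i => ?_⟩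
  rcases le_or_gt i m with h | h
  · rw [gaussBinom_eq_div hq h, div_eq_mul_inv, mul_inv, ← mul_assoc, norm_mul, norm_mul]
    exact mul_le_mul (mul_le_mul (hA' m) (hB' i) (norm_nonneg _) hA₀) (hB' _) (norm_nonneg _)
      (mul_nonneg hA₀ hB₀)
  · rw [gaussBinom_eq_zero_of_lt q h, norm_zero]
    exact mul_nonneg (mul_nonneg hA₀ hB₀) hB₀

lemma tendsto_gaussBinom (hq : ‖q‖ < 1) (m : ℕ) :
    Tendsto (fun n => gaussBinom q (2 * n + 1) (n + 1 + m)) atTop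
      (𝓝 (eulerFunction q)⁻¹) := by
  have hP := tendsto_qFactorial hq
  have hP₀ := eulerFunction_ne_zero hq
  have hlim : Tendsto
      (fun n => qFactorial q (2 * n + 1) / (qFactorial q (n + 1 + m) * qFactorial q (n - m)))
      atTop (𝓝 (eulerFunction q / (eulerFunction q * eulerFunction q))) :=
    (hP.comp (tendsto_atTop_mono (fun n => (by omega : n ≤ 2 * n + 1)) tendsto_id)).div
      ((hP.comp (tendsto_atTop_mono (fun n => (by omega : n ≤ n + 1 + m)) tendsto_id)).mul
        (hP.comp (tendsto_sub_atTop_nat m))) (mul_ne_zero hP₀ hP₀)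
  rw [div_mul_cancel_left₀ hP₀] at hlim
  refine hlim.congr' ?_
  filter_upwards [eventually_ge_atTop m] with n hn
  rw [gaussBinom_eq_div hq (by omega), show 2 * n + 1 - (n + 1 + m) = n - m by omega]

theorem eulerFunction_pow_three (hq : ‖q‖ < 1) :
    eulerFunction q ^ 3 = ∑' m : ℕ, (-1) ^ m * (2 * m + 1) * q ^ (m + 1).choose 2 := by
  rcases eq_or_ne q 0 with rfl | hq₀
  · rw [tsum_eq_single 0 fun m hm => by simp [Nat.succ_choose_two, hm]]
    simp [eulerFunction]
  set f : ℕ → ℕ → ℂ := fun n m =>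
    (-1) ^ m * (2 * m + 1) * q ^ (m + 1).choose 2 * gaussBinom q (2 * n + 1) (n + 1 + m)
  have hfinite (n : ℕ) : ∑' m, f n m = qFactorial q n ^ 2 := by
    rw [qFactorial_sq_eq_sum_gaussBinom hq₀ (qFactorial_ne_zero hq _)]
    exact tsum_eq_sum fun m hm => by
      simp [f, gaussBinom_eq_zero_of_lt q (show 2 * n + 1 < n + 1 + m by simp at hm; omega)]
  obtain ⟨C, hC⟩ := exists_norm_gaussBinom_le hq
  have hbound (n m : ℕ) : ‖f n m‖ ≤ C * ((2 * m + 1) * ‖q‖ ^ m) := by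
    have h₁ : ‖(2 * m + 1 : ℂ)‖ = 2 * m + 1 := by
      exact_mod_cast Complex.norm_natCast (2 * m + 1)
    have h₂ : ‖q‖ ^ (m + 1).choose 2 ≤ ‖q‖ ^ m :=
      pow_le_pow_of_le_one (norm_nonneg q) hq.le (by rw [Nat.succ_choose_two]; omega)
    simp only [f, norm_mul, norm_pow, norm_neg, norm_one, one_pow, one_mul, h₁]
    calc _ ≤ (2 * m + 1) * ‖q‖ ^ m * C := by gcongr; exact hC _ _
      _ = _ := by ring
  have hlim : Tendsto (fun n => ∑' m, f n m) atTop
      (𝓝 (∑' m : ℕ,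
        (-1) ^ m * (2 * m + 1) * q ^ (m + 1).choose 2 * (eulerFunction q)⁻¹)) :=
    tendsto_tsum_of_dominated_convergence
      ((summable_two_mul_add_one_mul_pow (norm_nonneg q) hq).mul_left C)
      (fun m => (tendsto_gaussBinom hq m).const_mul _) (.of_forall hbound)
  rw [funext hfinite, tsum_mul_right] at hlim
  have hP := eulerFunction_ne_zero hq
  have hlimit := tendsto_nhds_unique ((tendsto_qFactorial hq).pow 2) hlim
  rw [eq_mul_inv_iff_mul_eq₀ hP] at hlimit
  rw [← hlimit]
  ring

lemma eulerFunction_eq_tprod_odd_mul (hq : ‖q‖ < 1) :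
    eulerFunction q = (∏' k : ℕ, (1 - q ^ (2 * k + 1))) * eulerFunction (q ^ 2) := by
  have hodd : Multipliable fun k : ℕ => 1 - q ^ (2 * k + 1) :=
    multipliable_one_sub_pow_comp hq fun a b h => by simpa using h
  have heven (k : ℕ) : 1 - q ^ (2 * k + 1 + 1) = 1 - (q ^ 2) ^ (k + 1) := by ring
  rw [eulerFunction, ← tprod_even_mul_odd (f := fun n => 1 - q ^ (n + 1)) hodd]
  · simp only [heven, eulerFunction]
  · simpa only [heven] using (hasProd_eulerFunction (norm_pow_lt_one hq two_ne_zero)).multipliable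

lemma tprod_odd_mul_tprod_odd_neg (hq : ‖q‖ < 1) :
    (∏' k : ℕ, (1 - q ^ (2 * k + 1))) * ∏' k : ℕ, (1 - (-q) ^ (2 * k + 1)) =
      ∏' k : ℕ, (1 - (q ^ 2) ^ (2 * k + 1)) := by
  have hodd : Injective fun k : ℕ => 2 * k + 1 := fun a b h => by simpa using h
  rw [← (multipliable_one_sub_pow_comp hq hodd).tprod_mul
    (multipliable_one_sub_pow_comp (q := -q) (by rwa [norm_neg]) hodd)]
  refine tprod_congr fun k => ?_
  rw [(odd_two_mul_add_one k).neg_pow]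
  ring

theorem eulerFunction_mul_eulerFunction_neg_mul (hq : ‖q‖ < 1) :
    eulerFunction q * eulerFunction (-q) * eulerFunction (q ^ 4) = eulerFunction (q ^ 2) ^ 3 := by
  have h₁ := eulerFunction_eq_tprod_odd_mul hq
  have h₂ := eulerFunction_eq_tprod_odd_mul (q := -q) (by rwa [norm_neg])
  have h₃ := eulerFunction_eq_tprod_odd_mul (norm_pow_lt_one hq two_ne_zero)
  have h₄ := tprod_odd_mul_tprod_odd_neg hq
  rw [neg_sq] at h₂
  rw [← pow_mul] at h₃
  linear_combination (eulerFunction (-q) * eulerFunction (q ^ 4)) * h₁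
    + ((∏' k : ℕ, (1 - q ^ (2 * k + 1))) * eulerFunction (q ^ 2) * eulerFunction (q ^ 4)) * h₂
    + (eulerFunction (q ^ 2) ^ 2 * eulerFunction (q ^ 4)) * h₄ - eulerFunction (q ^ 2) ^ 2 * h₃

theorem hasProd_etaQuotient (hq : ‖q‖ < 1) :
    HasProd (fun n : ℕ => (1 - q ^ (2 * (n + 1))) ^ 9 /
      ((1 - q ^ (n + 1)) ^ 3 * (1 - q ^ (4 * (n + 1))) ^ 3)) (eulerFunction (-q) ^ 3) := by
  have hq₄ := norm_pow_lt_one hq four_ne_zero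
  have hne := mul_ne_zero (eulerFunction_ne_zero hq) (eulerFunction_ne_zero hq₄)
  have hquot : eulerFunction (q ^ 2) ^ 3 / (eulerFunction q * eulerFunction (q ^ 4)) =
      eulerFunction (-q) := by
    rw [div_eq_iff hne, ← eulerFunction_mul_eulerFunction_neg_mul hq]; ring
  rw [← hquot]
  refine ((((hasProd_eulerFunction (norm_pow_lt_one hq two_ne_zero)).pow 3).div₀
    ((hasProd_eulerFunction hq).mul (hasProd_eulerFunction hq₄)) hne).pow 3).congr_fun fun n => ?_
  simp only [div_pow, mul_pow, ← pow_mul]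

end Euler

lemma kronNegTwo_two_mul_add_one :
    ∀ m : ℕ, kronNegTwo (2 * m + 1) = (-1) ^ (m + (m + 1).choose 2)
  | 0 | 1 | 2 | 3 => by decide
  | m + 4 => by
    have hperiod : kronNegTwo (2 * (m + 4) + 1) = kronNegTwo (2 * m + 1) := by
      simp only [kronNegTwo, show (2 * (m + 4) + 1) % 8 = (2 * m + 1) % 8 by omega]
    have hexp : m + 4 + (m + 4 + 1).choose 2 = m + (m + 1).choose 2 + 2 * (2 * m + 7) := by
      simp only [Nat.succ_choose_two]; ring
    rw [hperiod, kronNegTwo_two_mul_add_one m, hexp, pow_add (-1 : ℤ) _ (2 * _), pow_mul]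
    norm_num

lemma sq_sub_one_div_eight (m : ℕ) : ((2 * m + 1) ^ 2 - 1) / 8 = (m + 1).choose 2 := by
  have h := Finset.sum_range_id_mul_two (m + 1)
  rw [Finset.sum_range_id, ← Nat.choose_two_right, Nat.add_sub_cancel] at h
  apply Nat.div_eq_of_eq_mul_left (by norm_num)
  apply Nat.sub_eq_of_eq_add
  nlinarith

theorem tsum_kronNegTwo_mul (q : ℂ) :
    ∑' n : ℕ, (kronNegTwo n : ℂ) * n * q ^ ((n ^ 2 - 1) / 8) =
      ∑' m : ℕ, (-1) ^ m * (2 * m + 1) * (-q) ^ (m + 1).choose 2 := by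
  have hsupp : support (fun n : ℕ => (kronNegTwo n : ℂ) * n * q ^ ((n ^ 2 - 1) / 8)) ⊆
      Set.range fun m => 2 * m + 1 := by
    intro n hn
    obtain ⟨m, rfl | rfl⟩ := Nat.even_or_odd' n
    · refine absurd ?_ hn
      simp [kronNegTwo,
        show 2 * m % 8 ≠ 1 ∧ 2 * m % 8 ≠ 3 ∧ 2 * m % 8 ≠ 5 ∧ 2 * m % 8 ≠ 7 by omega]
    · exact ⟨m, rfl⟩
  have hinj : Injective fun m : ℕ => 2 * m + 1 := fun a b h => by simpa using h
  rw [← hinj.tsum_eq hsupp]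
  refine tsum_congr fun m => ?_
  rw [sq_sub_one_div_eight, kronNegTwo_two_mul_add_one, neg_pow q, pow_add]
  push_cast
  ring

theorem prod_quotient_eq_series (q : ℂ) (hq : ‖q‖ < 1) :
    (∏' n : ℕ, (1 - q ^ (2*(n+1)))^9 / ((1 - q ^ (n+1))^3 * (1 - q ^ (4*(n+1)))^3)) =
      ∑' n : ℕ, (kronNegTwo n : ℂ) * (n : ℂ) * q ^ ((n^2 - 1) / 8) := by
  rw [(hasProd_etaQuotient hq).tprod_eq, eulerFunction_pow_three (by rwa [norm_neg]),
    tsum_kronNegTwo_mul]
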